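/- arXiv:1102.0974 — 2 statements merged into one kernel-verified Lean document; each statement's English description precedes it below -/
import Mathlib

section
/- Let Λ ⊆ ℝ² be an additive subgroup containing two linearly independent vectors e₁, e₂, and let k be a subfield of ℝ such that every v ∈ Λ is a k-linear combination of e₁ and e₂. If A ∈ GL(2,ℝ) satisfies A(Λ) ⊆ Λ, then tr(A) ∈ k. -/
/-! The images `A e₁ = a e₁ + b e₂` and `A e₂ = c e₁ + d e₂` have coefficients in `k` because
`A` preserves `Λ`. As `e₁, e₂` is a basis of `ℝ²`, the matrix `!![a, c; b, d]` represents `A`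
in that basis, so `tr A = a + d ∈ k`. -/

theorem LinearMap.trace_eq_add_of_linearIndependent_pair {K V : Type*} [Field K]
    [AddCommGroup V] [Module K V] [FiniteDimensional K V] (hV : Module.finrank K V = 2)
    {e₁ e₂ : V} (hind : LinearIndependent K ![e₁, e₂]) (f : V →ₗ[K] V) {a b c d : K}
    (hf₁ : f e₁ = a • e₁ + b • e₂) (hf₂ : f e₂ = c • e₁ + d • e₂) :
    LinearMap.trace K V f = a + d := by
  let B := basisOfLinearIndependentOfCardEqFinrank hind (by simp [hV])
  have hB : ⇑B = ![e₁, e₂] := coe_basisOfLinearIndependentOfCardEqFinrank hind _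
  have hB₀ : e₁ = B 0 := by simp [hB]
  have hB₁ : e₂ = B 1 := by simp [hB]
  rw [LinearMap.trace_eq_matrix_trace K B, Matrix.trace_fin_two, LinearMap.toMatrix_apply,
    LinearMap.toMatrix_apply, ← hB₀, ← hB₁, hf₁, hf₂, hB₀, hB₁]
  simp

theorem trace_mem_holonomy_field_general (Λ : AddSubgroup (Fin 2 → ℝ)) (e₁ e₂ : Fin 2 → ℝ)
    (he₁ : e₁ ∈ Λ) (he₂ : e₂ ∈ Λ) (hind : LinearIndependent ℝ ![e₁, e₂])
    (k : Subfield ℝ)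
    (hk : ∀ v ∈ Λ, ∃ a b : ℝ, a ∈ k ∧ b ∈ k ∧ v = a • e₁ + b • e₂)
    (A : Matrix (Fin 2) (Fin 2) ℝ)
    (hAL : ∀ v ∈ Λ, A.mulVec v ∈ Λ) :
    A.trace ∈ k := by
  obtain ⟨a, b, ha, -, hab⟩ := hk _ (hAL e₁ he₁)
  obtain ⟨c, d, -, hd, hcd⟩ := hk _ (hAL e₂ he₂)
  have htr : A.trace = a + d := by
    rw [← Matrix.trace_toLin'_eq]
    exact LinearMap.trace_eq_add_of_linearIndependent_pair (by simp) hind _ hab hcd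
  exact htr ▸ k.add_mem ha hd

theorem trace_mem_holonomy_field (Λ : AddSubgroup (Fin 2 → ℝ)) (e₁ e₂ : Fin 2 → ℝ)
    (he₁ : e₁ ∈ Λ) (he₂ : e₂ ∈ Λ) (hind : LinearIndependent ℝ ![e₁, e₂])
    (k : Subfield ℝ)
    (hk : ∀ v ∈ Λ, ∃ a b : ℝ, a ∈ k ∧ b ∈ k ∧ v = a • e₁ + b • e₂)
    (A : Matrix (Fin 2) (Fin 2) ℝ) (hA : A.det ≠ 0)
    (hAL : ∀ v ∈ Λ, A.mulVec v ∈ Λ) :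
    A.trace ∈ k :=
  trace_mem_holonomy_field_general Λ e₁ e₂ he₁ he₂ hind k hk A hAL
end

section
/- If μ₁, μ₂, μ₃ are real numbers such that 1, μ₁, μ₂, μ₃ are linearly independent over ℚ, then the vectors (1+μ₂, −1), (−(1+μ₁), 1), (−(1+μ₃), 1) in ℝ² are linearly independent over ℤ, i.e. the ℤ-module they generate is free of rank 3. -/
theorem rank_three_holonomy (μ₁ μ₂ μ₃ : ℝ)
    (hind : LinearIndependent ℚ ![(1 : ℝ), μ₁, μ₂, μ₃]) :
    LinearIndependent ℤ
      ![![1 + μ₂, -1], ![-(1 + μ₁), 1], ![-(1 + μ₃), (1 : ℝ)]] := by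
  rw [Fintype.linearIndependent_iff] at hind ⊢
  intro g hg
  have h0 := congrFun hg 0
  have h1 := congrFun hg 1
  simp [Fin.sum_univ_three, Matrix.vecHead, Matrix.vecTail] at h0 h1
  have key := hind ![(g 0 : ℚ) - g 1 - g 2, -(g 1 : ℚ), (g 0 : ℚ), -(g 2 : ℚ)] ?_
  · have k0 := key 2
    have k1 := key 1
    have k2 := key 3
    simp at k0 k1 k2
    intro i
    fin_cases i <;> simp [k0, k1, k2]
  · rw [Fin.sum_univ_four]
    simp only [Matrix.cons_val_zero, Matrix.cons_val_one, Matrix.head_cons,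
      Matrix.cons_val_two, Matrix.cons_val_three, Matrix.tail_cons, Rat.smul_def]
    push_cast
    linarith [h0, h1]
end
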